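/- For n ≥ 3 and 2 ≤ i ≤ n−1, b(n,i,1) = b(n−1, i−1) + Σ_{d=2}^{i−1} c(n−i+d, d), where b(n−1,i−1) = Σ_{k≠i−1} b(n−1,k,i−1) and c(m,d) = Σ_{k≠d} c(m,k,d). -/

import Mathlib

open List

/-- `w` is a linear permutation of `[n] = {1,…,n}` written in one-line notation. -/
def IsPermOf (n : ℕ) (w : List ℕ) : Prop :=
  w.Perm ((List.range n).map (· + 1))

/-- occurrence of the vincular pattern 1̄2̄3 : positions a, a+1, c with c > a+1
forming an increasing triple. -/
def Occ123 (w : List ℕ) : Prop :=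
  ∃ a c, a + 1 < c ∧ c < w.length ∧
    w.getD a 0 < w.getD (a + 1) 0 ∧ w.getD (a + 1) 0 < w.getD c 0

/-- occurrence of the vincular pattern 41\overline{23} : positions a < b < c (and c+1)
with w_b < w_c < w_{c+1} < w_a. -/
def Occ4123 (w : List ℕ) : Prop :=
  ∃ a b c, a < b ∧ b < c ∧ c + 1 < w.length ∧
    w.getD b 0 < w.getD c 0 ∧ w.getD c 0 < w.getD (c + 1) 0 ∧
    w.getD (c + 1) 0 < w.getD a 0

/-- occurrence of the vincular pattern 1\overline{23} : positions a < b (and b+1)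
forming an increasing triple. -/
def Occ1_23 (w : List ℕ) : Prop :=
  ∃ a b, a < b ∧ b + 1 < w.length ∧
    w.getD a 0 < w.getD b 0 ∧ w.getD b 0 < w.getD (b + 1) 0

/-- occurrence of the vincular pattern \overline{23}41 : positions a, a+1, c, d with
a+1 < c < d and w_d < w_a < w_{a+1} < w_c. -/
def Occ2341 (w : List ℕ) : Prop :=
  ∃ a c d, a + 1 < c ∧ c < d ∧ d < w.length ∧
    w.getD d 0 < w.getD a 0 ∧ w.getD a 0 < w.getD (a + 1) 0 ∧
    w.getD (a + 1) 0 < w.getD c 0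

/-- a circular permutation (represented by any linear reading `w`) avoids
\overline{23}41 iff no cyclic rotation of `w` contains it. -/
def CircAvoids2341 (w : List ℕ) : Prop := ∀ k, ¬ Occ2341 (w.rotate k)

/-- the set `L_n` of linear permutations of `[n]` avoiding both 1̄2̄3 and 41\overline{23}. -/
def Lset (n : ℕ) : Set (List ℕ) :=
  {w | IsPermOf n w ∧ ¬ Occ123 w ∧ ¬ Occ4123 w}

/-- the permutation (n−1)(n−2)⋯1 n. -/
def excludedPerm (n : ℕ) : List ℕ :=
  ((List.range (n - 1)).map (· + 1)).reverse ++ [n]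

/-- `L_n^* = L_n \ {(n−1)(n−2)⋯1n}`. -/
def Lstar (n : ℕ) : Set (List ℕ) := Lset n \ {excludedPerm n}

/-- `B_n`: members of `L_n^*` in which 1 occurs to the right of n. -/
def Bset (n : ℕ) : Set (List ℕ) :=
  {w ∈ Lstar n | w.idxOf n < w.idxOf 1}

/-- `C_n`: members of `L_n^*` in which 1 occurs to the left of n and 2 to its right. -/
def Cset (n : ℕ) : Set (List ℕ) :=
  {w ∈ Lstar n | w.idxOf 1 < w.idxOf n ∧ w.idxOf n < w.idxOf 2}

/-- members of `B_n` ending in the two letters i, j. -/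
def Bnij (n i j : ℕ) : Set (List ℕ) :=
  {w ∈ Bset n | ∃ u, w = u ++ [i, j]}

/-- members of `C_n` ending in the two letters i, j. -/
def Cnij (n i j : ℕ) : Set (List ℕ) :=
  {w ∈ Cset n | ∃ u, w = u ++ [i, j]}

noncomputable def bcount (n i j : ℕ) : ℕ := (Bnij n i j).ncard
noncomputable def ccount (n i j : ℕ) : ℕ := (Cnij n i j).ncard

/-- `b(n,j)`: the number of members of `B_n` ending in the letter j. -/
noncomputable def bLast (n j : ℕ) : ℕ := Set.ncard {w ∈ Bset n | ∃ u, w = u ++ [j]}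

/-- `c(n,j)`: the number of members of `C_n` ending in the letter j. -/
noncomputable def cLast (n j : ℕ) : ℕ := Set.ncard {w ∈ Cset n | ∃ u, w = u ++ [j]}

/-- `V_n`: linear permutations of `[n]` avoiding both 1̄2̄3 and 1\overline{23}. -/
def Vset (n : ℕ) : Set (List ℕ) :=
  {w | IsPermOf n w ∧ ¬ Occ123 w ∧ ¬ Occ1_23 w}

/-- `v(n,j)`: the number of members of `V_n` ending in the letter j. -/
noncomputable def vcount (n j : ℕ) : ℕ := Set.ncard {w ∈ Vset n | ∃ u, w = u ++ [j]}

/-!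
Split `B_{n,i,1}` according to the position of 2.

If 2 lies right of `n`, deleting the final 1 and lowering every letter by one is a bijection onto
the members of `B_{n-1}` ending in `i - 1`.

If 2 lies left of `n`, an ascent followed by `n` would be an occurrence of 1̄2̄3, so the word reads
`P 2 n Q 1` with `P` decreasing. Let `s ≥ 1` be largest with `3, …, s + 1` all left of 2; these
letters then form the tail of `P`. Deleting them and the final 1, replacing 2 by 1 and lowering the
other letters by `s` is a bijection onto the members of `C_{n-s}` ending in `d = i - s`. Both
patterns are anchored at an adjacent ascent, the deleted block creates no ascent and lies below the
top of every ascent of `Q`, so the bijection respects avoidance.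

Finally `b(n-1, i-1)` and `c(m, d)` split according to the second-to-last letter.
-/

section Avoidance

def AvoidsLPatterns (w : List ℕ) : Prop := ¬ Occ123 w ∧ ¬ Occ4123 w

lemma getD_mem_of_lt {w : List ℕ} {j : ℕ} (hj : j < w.length) : w.getD j 0 ∈ w := by
  rw [List.getD_eq_getElem _ _ hj]
  exact List.getElem_mem _

lemma getD_ne_getD_of_nodup {w : List ℕ} (hnd : w.Nodup) {j k : ℕ}
    (hj : j < w.length) (hk : k < w.length) (hjk : j ≠ k) : w.getD j 0 ≠ w.getD k 0 := by
  rw [List.getD_eq_getElem _ _ hj, List.getD_eq_getElem _ _ hk]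
  exact fun h => hjk (hnd.getElem_inj_iff.1 h)

lemma avoidsLPatterns_iff_forall_ascent {w : List ℕ} (hnd : w.Nodup) :
    AvoidsLPatterns w ↔ ∀ c, c + 1 < w.length → w.getD c 0 < w.getD (c + 1) 0 →
      (∀ j, c + 1 < j → j < w.length → w.getD j 0 < w.getD (c + 1) 0) ∧
      ∀ a b, a < b → b < c → ¬ (w.getD b 0 < w.getD c 0 ∧ w.getD (c + 1) 0 < w.getD a 0) := by
  constructor
  · rintro ⟨h123, h4123⟩ c hc hasc
    refine ⟨fun j hj hjl => ?_, fun a b hab hbc ⟨hb, ha⟩ =>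
      h4123 ⟨a, b, c, hab, hbc, hc, hb, hasc, ha⟩⟩
    have hne := getD_ne_getD_of_nodup hnd hjl (show c + 1 < w.length from hc) (by omega)
    by_contra hge
    exact h123 ⟨c, j, hj, hjl, hasc, by omega⟩
  · intro H
    refine ⟨fun ⟨a, c, hac, hcl, h1, h2⟩ => ?_, fun ⟨a, b, c, hab, hbc, hcl, h1, h2, h3⟩ =>
      (H c hcl h2).2 a b hab hbc ⟨h1, h3⟩⟩
    have := (H a (by omega) h1).1 c hac hcl
    omega

lemma avoidsLPatterns_append_singleton_iff {w : List ℕ} {o : ℕ} (ho : ∀ x ∈ w, o < x) :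
    AvoidsLPatterns (w ++ [o]) ↔ AvoidsLPatterns w := by
  have hD : ∀ j, j < w.length → (w ++ [o]).getD j 0 = w.getD j 0 :=
    fun j hj => List.getD_append _ _ _ _ hj
  have hlast : (w ++ [o]).getD w.length 0 = o := by simp
  have hlen : (w ++ [o]).length = w.length + 1 := by simp
  constructor
  · rintro ⟨h123, h4123⟩
    constructor
    · rintro ⟨a, c, hac, hcl, p1, p2⟩
      exact h123 ⟨a, c, hac, by omega, by rwa [hD a (by omega), hD (a + 1) (by omega)],
        by rwa [hD (a + 1) (by omega), hD c (by omega)]⟩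
    · rintro ⟨a, b, c, hab, hbc, hcl, p1, p2, p3⟩
      exact h4123 ⟨a, b, c, hab, hbc, by omega,
        by rwa [hD b (by omega), hD c (by omega)], by rwa [hD c (by omega), hD (c + 1) (by omega)],
        by rwa [hD (c + 1) (by omega), hD a (by omega)]⟩
  · rintro ⟨h123, h4123⟩
    constructor
    · rintro ⟨a, c, hac, hcl, p1, p2⟩
      rw [hlen] at hcl
      rw [hD a (by omega), hD (a + 1) (by omega)] at p1
      rw [hD (a + 1) (by omega)] at p2
      rcases Nat.lt_or_ge c w.length with hc | hc
      · exact h123 ⟨a, c, hac, hc, p1, by rwa [hD c hc] at p2⟩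
      · rw [show c = w.length by omega, hlast] at p2
        exact absurd (ho _ (getD_mem_of_lt (show a + 1 < w.length by omega))) (by omega)
    · rintro ⟨a, b, c, hab, hbc, hcl, p1, p2, p3⟩
      rw [hlen] at hcl
      rw [hD c (by omega)] at p1 p2
      rw [hD b (by omega)] at p1
      rw [hD a (by omega)] at p3
      rcases Nat.lt_or_ge (c + 1) w.length with hc | hc
      · exact h4123 ⟨a, b, c, hab, hbc, hc, p1, by rwa [hD (c + 1) hc] at p2,
          by rwa [hD (c + 1) hc] at p3⟩
      · rw [show c + 1 = w.length by omega, hlast] at p2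
        exact absurd (ho _ (getD_mem_of_lt (show c < w.length by omega))) (by omega)

lemma avoidsLPatterns_map_iff {w : List ℕ} {ρ : ℕ → ℕ} (hρ : StrictMonoOn ρ {x | x ∈ w}) :
    AvoidsLPatterns (w.map ρ) ↔ AvoidsLPatterns w := by
  have hlen : (w.map ρ).length = w.length := List.length_map _
  have hlt : ∀ j k, j < w.length → k < w.length →
      ((w.map ρ).getD j 0 < (w.map ρ).getD k 0 ↔ w.getD j 0 < w.getD k 0) := by
    intro j k hj hk
    rw [List.getD_eq_getElem _ _ (by simpa), List.getD_eq_getElem _ _ (by simpa),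
      List.getElem_map, List.getElem_map, ← List.getD_eq_getElem _ 0 hj,
      ← List.getD_eq_getElem _ 0 hk]
    exact hρ.lt_iff_lt (getD_mem_of_lt hj) (getD_mem_of_lt hk)
  have h123 : Occ123 (w.map ρ) ↔ Occ123 w := by
    simp only [Occ123, hlen]
    refine exists_congr fun a => exists_congr fun c => ?_
    constructor
    · rintro ⟨hac, hcl, p1, p2⟩
      exact ⟨hac, hcl, (hlt _ _ (by omega) (by omega)).1 p1, (hlt _ _ (by omega) hcl).1 p2⟩
    · rintro ⟨hac, hcl, p1, p2⟩
      exact ⟨hac, hcl, (hlt _ _ (by omega) (by omega)).2 p1, (hlt _ _ (by omega) hcl).2 p2⟩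
  have h4123 : Occ4123 (w.map ρ) ↔ Occ4123 w := by
    simp only [Occ4123, hlen]
    refine exists_congr fun a => exists_congr fun b => exists_congr fun c => ?_
    constructor
    · rintro ⟨hab, hbc, hcl, p1, p2, p3⟩
      exact ⟨hab, hbc, hcl, (hlt _ _ (by omega) (by omega)).1 p1,
        (hlt _ _ (by omega) (by omega)).1 p2, (hlt _ _ (by omega) (by omega)).1 p3⟩
    · rintro ⟨hab, hbc, hcl, p1, p2, p3⟩
      exact ⟨hab, hbc, hcl, (hlt _ _ (by omega) (by omega)).2 p1,
        (hlt _ _ (by omega) (by omega)).2 p2, (hlt _ _ (by omega) (by omega)).2 p3⟩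
  rw [AvoidsLPatterns, AvoidsLPatterns, h123, h4123]

def TailAscentCond (P Q : List ℕ) : Prop :=
  ∀ c, c + 1 < Q.length → Q.getD c 0 < Q.getD (c + 1) 0 →
    (∀ j, c + 1 < j → j < Q.length → Q.getD j 0 < Q.getD (c + 1) 0) ∧
    (∀ b, b < c → ¬ Q.getD b 0 < Q.getD c 0) ∧
    ∀ p ∈ P, p < Q.getD (c + 1) 0

section AppendConsCons

variable {P Q : List ℕ} {z N : ℕ}

lemma getD_append_cons_cons_add (j : ℕ) :
    (P ++ z :: N :: Q).getD (P.length + 2 + j) 0 = Q.getD j 0 := by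
  rw [List.getD_append_right _ _ _ _ (by omega), show P.length + 2 + j - P.length = j + 2 by omega]
  rfl

lemma tailAscentCond_of_avoidsLPatterns (hnd : (P ++ z :: N :: Q).Nodup)
    (hQz : ∀ q ∈ Q, z < q) (hQN : ∀ q ∈ Q, q < N) (h : AvoidsLPatterns (P ++ z :: N :: Q)) :
    TailAscentCond P Q := by
  have hDQ := getD_append_cons_cons_add (P := P) (z := z) (N := N) (Q := Q)
  intro c hc hasc
  have Hc := (avoidsLPatterns_iff_forall_ascent hnd).1 h (P.length + 2 + c) (by simp; omega)
    (by rwa [hDQ, show P.length + 2 + c + 1 = P.length + 2 + (c + 1) by omega, hDQ])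
  rw [show P.length + 2 + c + 1 = P.length + 2 + (c + 1) by omega, hDQ, hDQ] at Hc
  refine ⟨fun j hj hjl => ?_, fun b hb hlt => ?_, fun p hp => ?_⟩
  · simpa only [hDQ] using Hc.1 (P.length + 2 + j) (by omega) (by simp; omega)
  · have := Hc.2 (P.length + 1) (P.length + 2 + b) (by omega) (by omega)
    rw [hDQ, show (P ++ z :: N :: Q).getD (P.length + 1) 0 = N by simp] at this
    exact this ⟨hlt, hQN _ (getD_mem_of_lt (by omega))⟩
  · obtain ⟨a, ha, rfl⟩ := List.mem_iff_getElem.1 hp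
    have hnot := Hc.2 a P.length ha (by omega)
    rw [show (P ++ z :: N :: Q).getD P.length 0 = z by simp, List.getD_append _ _ _ _ ha,
      List.getD_eq_getElem _ _ ha] at hnot
    have hq : Q.getD (c + 1) 0 ∈ Q := getD_mem_of_lt hc
    have := (List.nodup_append.1 hnd).2.2 _ hp (Q.getD (c + 1) 0)
      (List.mem_cons_of_mem _ (List.mem_cons_of_mem _ hq))
    by_contra hge
    exact hnot ⟨hQz _ (getD_mem_of_lt (by omega)), by omega⟩

lemma eq_or_exists_of_ascent (hPz : ∀ p ∈ P, z < p) (hQN : ∀ q ∈ Q, q < N)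
    (hP : P.Pairwise (· > ·)) {c : ℕ} (hc : c + 1 < (P ++ z :: N :: Q).length)
    (hasc : (P ++ z :: N :: Q).getD c 0 < (P ++ z :: N :: Q).getD (c + 1) 0) :
    c = P.length ∨ ∃ k, c = P.length + 2 + k := by
  have hPj : ∀ j < P.length, (P ++ z :: N :: Q).getD j 0 = P.getD j 0 :=
    fun j hj => List.getD_append _ _ _ _ hj
  have hz : (P ++ z :: N :: Q).getD P.length 0 = z := by simp
  have hN : (P ++ z :: N :: Q).getD (P.length + 1) 0 = N := by simp
  simp only [List.length_append, List.length_cons] at hc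
  rcases Nat.lt_or_ge (c + 1) P.length with h | h
  · rw [hPj c (by omega), hPj (c + 1) h, List.getD_eq_getElem _ _ h,
      List.getD_eq_getElem _ _ (by omega)] at hasc
    exact absurd (List.pairwise_iff_getElem.1 hP c (c + 1) (by omega) h (by omega)) (by omega)
  rcases Nat.lt_or_ge c P.length with h' | h'
  · rw [hPj c h', show c + 1 = P.length by omega, hz] at hasc
    exact absurd hasc (by have := hPz _ (getD_mem_of_lt h'); omega)
  rcases Nat.eq_or_lt_of_le h' with h'' | h''
  · exact Or.inl h''.symm
  rcases Nat.eq_or_lt_of_le h'' with h₃ | h₃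
  · rw [← h₃, hN, show P.length + 1 + 1 = P.length + 2 + 0 by omega,
      getD_append_cons_cons_add] at hasc
    exact absurd hasc (by have := hQN _ (getD_mem_of_lt (show 0 < Q.length by omega)); omega)
  · exact Or.inr ⟨c - (P.length + 2), by omega⟩

lemma avoidsLPatterns_of_tailAscentCond (hnd : (P ++ z :: N :: Q).Nodup)
    (hPz : ∀ p ∈ P, z < p) (hQN : ∀ q ∈ Q, q < N) (hP : P.Pairwise (· > ·))
    (H : TailAscentCond P Q) : AvoidsLPatterns (P ++ z :: N :: Q) := by
  have hDQ := getD_append_cons_cons_add (P := P) (z := z) (N := N) (Q := Q)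
  have hPj : ∀ j < P.length, (P ++ z :: N :: Q).getD j 0 = P.getD j 0 :=
    fun j hj => List.getD_append _ _ _ _ hj
  have hN : (P ++ z :: N :: Q).getD (P.length + 1) 0 = N := by simp
  have hlen : (P ++ z :: N :: Q).length = P.length + 2 + Q.length := by simp; omega
  refine (avoidsLPatterns_iff_forall_ascent hnd).2 fun c hc hasc => ?_
  rcases eq_or_exists_of_ascent hPz hQN hP hc hasc with rfl | ⟨c, rfl⟩
  · rw [hN, show (P ++ z :: N :: Q).getD P.length 0 = z by simp]
    refine ⟨fun j hj hjl => ?_, fun a b hab hbc ⟨hb, _⟩ => ?_⟩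
    · obtain ⟨k, rfl⟩ : ∃ k, j = P.length + 2 + k := ⟨j - (P.length + 2), by omega⟩
      rw [hDQ]
      exact hQN _ (getD_mem_of_lt (by omega))
    · rw [hPj b hbc] at hb
      exact absurd hb (by have := hPz _ (getD_mem_of_lt hbc); omega)
  rw [show P.length + 2 + c + 1 = P.length + 2 + (c + 1) by omega, hDQ, hDQ] at hasc ⊢
  obtain ⟨HC1, HC2, HC3⟩ := H c (by omega) hasc
  refine ⟨fun j hj hjl => ?_, fun a b hab hbc ⟨hb, ha⟩ => ?_⟩
  · obtain ⟨k, rfl⟩ : ∃ k, j = P.length + 2 + k := ⟨j - (P.length + 2), by omega⟩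
    rw [hDQ]
    exact HC1 k (by omega) (by omega)
  rcases Nat.lt_or_ge b (P.length + 1) with hbL | hbL
  · rw [hPj a (by omega)] at ha
    exact absurd ha (by have := HC3 _ (getD_mem_of_lt (show a < P.length by omega)); omega)
  rcases Nat.eq_or_lt_of_le hbL with hbL | hbL
  · rw [← hbL, hN] at hb
    exact absurd hb (by have := hQN _ (getD_mem_of_lt (show c < Q.length by omega)); omega)
  obtain ⟨b, rfl⟩ : ∃ k, b = P.length + 2 + k := ⟨b - (P.length + 2), by omega⟩
  rw [hDQ] at hb
  exact HC2 b (by omega) hb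

lemma avoidsLPatterns_append_cons_cons_iff (hnd : (P ++ z :: N :: Q).Nodup)
    (hPz : ∀ p ∈ P, z < p) (hQz : ∀ q ∈ Q, z < q) (hQN : ∀ q ∈ Q, q < N)
    (hP : P.Pairwise (· > ·)) :
    AvoidsLPatterns (P ++ z :: N :: Q) ↔ TailAscentCond P Q :=
  ⟨tailAscentCond_of_avoidsLPatterns hnd hQz hQN,
    avoidsLPatterns_of_tailAscentCond hnd hPz hQN hP⟩

end AppendConsCons

lemma avoidsLPatterns_insert_block_iff {P B Q : List ℕ} {z N : ℕ}
    (hnd : (P ++ B ++ z :: N :: Q).Nodup) (hP : P.Pairwise (· > ·)) (hB : B.Pairwise (· > ·))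
    (hBz : ∀ b ∈ B, z < b ∧ (∀ p ∈ P, b < p) ∧ ∀ q ∈ Q, b < q)
    (hPz : ∀ p ∈ P, z < p) (hQ : ∀ q ∈ Q, z < q ∧ q < N) :
    AvoidsLPatterns (P ++ B ++ z :: N :: Q) ↔ AvoidsLPatterns (P ++ z :: N :: Q) := by
  have hnd' : (P ++ z :: N :: Q).Nodup :=
    hnd.sublist ((List.sublist_append_left P B).append_right _)
  rw [avoidsLPatterns_append_cons_cons_iff hnd' hPz (fun q hq => (hQ q hq).1)
      (fun q hq => (hQ q hq).2) hP,
    avoidsLPatterns_append_cons_cons_iff hnd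
      (by simpa [or_imp, forall_and] using ⟨hPz, fun b hb => (hBz b hb).1⟩)
      (fun q hq => (hQ q hq).1) (fun q hq => (hQ q hq).2)
      (List.pairwise_append.2 ⟨hP, hB, fun p hp b hb => (hBz b hb).2.1 p hp⟩)]
  refine forall_congr' fun c => forall_congr' fun hc => forall_congr' fun hasc => ?_
  have hBlt : ∀ b ∈ B, b < Q.getD (c + 1) 0 := fun b hb => (hBz b hb).2.2 _ (getD_mem_of_lt hc)
  simp only [List.forall_mem_append]
  exact and_congr_right' (and_congr_right' (and_iff_left hBlt))

end Avoidance

section Lists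

lemma idxOf_lt_idxOf_iff_mem {α : Type*} [BEq α] [LawfulBEq α] {A C : List α} {x y : α}
    (hx : x ∉ A) : (A ++ x :: C).idxOf y < (A ++ x :: C).idxOf x ↔ y ∈ A := by
  rw [List.idxOf_append_of_notMem hx, List.idxOf_cons_self, add_zero]
  by_cases hy : y ∈ A
  · simp [List.idxOf_append_of_mem hy, List.idxOf_lt_length_iff, hy]
  · simp [List.idxOf_append_of_notMem hy, hy]

lemma idxOf_map_of_injective {α β : Type*} [BEq α] [LawfulBEq α] [BEq β] [LawfulBEq β]
    {f : α → β} (hf : Function.Injective f) (l : List α) (a : α) :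
    (l.map f).idxOf (f a) = l.idxOf a := by
  induction l with
  | nil => rfl
  | cons b l ih =>
    by_cases hba : b = a
    · simp [hba]
    · rw [List.map_cons, List.idxOf_cons_ne _ (hf.ne hba), List.idxOf_cons_ne _ hba, ih]

lemma ne_of_mem_of_nodup_append_cons_cons {α : Type*} {γ R : List α} {a b x : α}
    (hnd : (γ ++ a :: b :: R).Nodup) (hx : x ∈ γ ++ R) : x ≠ a ∧ x ≠ b := by
  have hperm : (γ ++ a :: b :: R).Perm (a :: b :: (γ ++ R)) :=
    List.perm_middle.trans (List.perm_middle.cons a)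
  obtain ⟨ha, hb⟩ := List.nodup_cons.1 (hperm.nodup_iff.1 hnd)
  exact ⟨fun h => ha (by simp [← h, hx]), fun h => (List.nodup_cons.1 hb).1 (h ▸ hx)⟩

lemma exists_eq_append_cons_cons_of_min_max {w : List ℕ} {z N : ℕ} (hnd : w.Nodup)
    (h123 : ¬ Occ123 w) (hN : N ∈ w) (hz : ∀ x ∈ w, z ≤ x) (hNmax : ∀ x ∈ w, x ≤ N)
    (hzN : w.idxOf z < w.idxOf N) :
    ∃ P Q, w = P ++ z :: N :: Q ∧ P.Pairwise (· > ·) := by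
  obtain ⟨A, C, rfl⟩ := List.append_of_mem hN
  have hNA : N ∉ A := fun h => (List.nodup_append.1 hnd).2.2 N h N (by simp) rfl
  have hzA : z ∈ A := (idxOf_lt_idxOf_iff_mem hNA).1 hzN
  have hAN : ∀ x ∈ A, x < N := fun x hx =>
    lt_of_le_of_ne (hNmax x (by simp [hx])) (fun h => hNA (h ▸ hx))
  have hdesc : A.Pairwise (· > ·) := by
    refine List.isChain_iff_pairwise.1 (List.isChain_iff_getElem.2 fun a ha => ?_)
    have hne := getD_ne_getD_of_nodup (hnd.sublist (List.sublist_append_left A _))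
      (show a < A.length by omega) ha (by omega)
    rw [List.getD_eq_getElem _ _ (by omega), List.getD_eq_getElem _ _ ha] at hne
    by_contra hlt
    refine h123 ⟨a, A.length, by omega, by simp, ?_, ?_⟩
    · rw [List.getD_append _ _ _ _ (by omega), List.getD_append _ _ _ _ ha,
        List.getD_eq_getElem _ _ (by omega), List.getD_eq_getElem _ _ ha]
      omega
    · rw [List.getD_append _ _ _ _ ha, List.getD_eq_getElem _ _ ha]
      simpa using hAN _ (List.getElem_mem ha)
  obtain ⟨P, x, rfl⟩ : ∃ P x, A = P ++ [x] := by
    rcases List.eq_nil_or_concat A with h | ⟨P, x, h⟩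
    · simp [h] at hzA
    · exact ⟨P, x, by simpa using h⟩
  have hxz : x = z := by
    by_contra hxz
    have hzP : z ∈ P := by simpa [Ne.symm hxz] using hzA
    have := (List.pairwise_append.1 hdesc).2.2 z hzP x (by simp)
    have := hz x (by simp)
    omega
  subst hxz
  exact ⟨P, C, by simp, (List.pairwise_append.1 hdesc).1⟩

lemma map_sub_map_add {s : ℕ} {l : List ℕ} (hl : ∀ x ∈ l, s ≤ x) :
    (l.map (· - s)).map (· + s) = l := by
  rw [List.map_map]
  conv_rhs => rw [← List.map_id l]
  exact List.map_congr_left fun x hx => by have := hl x hx; simp; omega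

end Lists

section Permutations

lemma ncard_biUnion_finset {ι α : Type*} {t : Finset ι} {s : ι → Set α}
    (hs : ∀ i ∈ t, (s i).Finite) (h : (t : Set ι).PairwiseDisjoint s) :
    (⋃ i ∈ t, s i).ncard = ∑ i ∈ t, (s i).ncard := by
  rw [← finsum_mem_coe_finset]
  exact t.finite_toSet.ncard_biUnion hs h

lemma isPermOf_iff {n : ℕ} {w : List ℕ} :
    IsPermOf n w ↔ w.Nodup ∧ ∀ x, x ∈ w ↔ 1 ≤ x ∧ x ≤ n := by
  have hnd : ((List.range n).map (· + 1)).Nodup :=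
    List.nodup_range.map fun a b h => by simpa using h
  have hmem : ∀ x, x ∈ (List.range n).map (· + 1) ↔ 1 ≤ x ∧ x ≤ n := fun x => by
    simp only [List.mem_map, List.mem_range]
    exact ⟨by rintro ⟨y, hy, rfl⟩; omega, fun h => ⟨x - 1, by omega, by omega⟩⟩
  refine ⟨fun h => ⟨h.nodup_iff.2 hnd, fun x => by rw [h.mem_iff, hmem]⟩, fun ⟨h1, h2⟩ => ?_⟩
  rw [IsPermOf, List.perm_ext_iff_of_nodup h1 hnd]
  exact fun x => by rw [h2, hmem]

lemma finite_of_forall_isPermOf {n : ℕ} {S : Set (List ℕ)} (h : ∀ w ∈ S, IsPermOf n w) :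
    S.Finite :=
  (List.finite_toSet ((List.range n).map (· + 1)).permutations).subset fun w hw =>
    List.mem_permutations.2 (h w hw)

lemma ncard_endsWith_eq_sum {S : Set (List ℕ)} {m j : ℕ} (hS : ∀ w ∈ S, IsPermOf m w)
    (hm : 2 ≤ m) :
    {w ∈ S | ∃ u, w = u ++ [j]}.ncard =
      ∑ k ∈ (Finset.Icc 1 m).erase j, {w ∈ S | ∃ u, w = u ++ [k, j]}.ncard := by
  have hsplit : {w ∈ S | ∃ u, w = u ++ [j]} =
      ⋃ k ∈ (Finset.Icc 1 m).erase j, {w ∈ S | ∃ u, w = u ++ [k, j]} := by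
    ext w
    simp only [Set.mem_ofPred_eq, Set.mem_iUnion, exists_prop]
    constructor
    · rintro ⟨hw, u, rfl⟩
      obtain ⟨hnd, hmem⟩ := isPermOf_iff.1 (hS _ hw)
      rcases List.eq_nil_or_concat u with rfl | ⟨u, k, rfl⟩
      · have h1 := (hmem 1).2 ⟨le_rfl, by omega⟩
        have h2 := (hmem 2).2 ⟨by omega, hm⟩
        simp only [List.nil_append, List.mem_singleton] at h1 h2
        omega
      have hk := (hmem k).1 (by simp)
      rw [List.concat_eq_append, List.append_assoc] at hnd
      have hkj : k ≠ j := by simpa using hnd.sublist (List.sublist_append_right u [k, j])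
      exact ⟨k, Finset.mem_erase.2 ⟨hkj, Finset.mem_Icc.2 hk⟩, by simpa using hw, u, by simp⟩
    · rintro ⟨k, -, hw, u, rfl⟩
      exact ⟨hw, u ++ [k], by simp⟩
  rw [hsplit, ncard_biUnion_finset (fun k _ => finite_of_forall_isPermOf fun w hw => hS w hw.1)]
  intro k _ l _ hkl
  refine Set.disjoint_left.2 fun w ⟨_, u, hu⟩ ⟨_, v, hv⟩ => hkl ?_
  simpa using (List.append_inj' (hu.symm.trans hv) rfl).2

lemma bLast_eq_sum_bcount {n j : ℕ} (hn : 2 ≤ n) :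
    bLast n j = ∑ k ∈ (Finset.Icc 1 n).erase j, bcount n k j :=
  ncard_endsWith_eq_sum (fun _ hw => hw.1.1.1) hn

lemma cLast_eq_sum_ccount {m j : ℕ} (hm : 2 ≤ m) :
    cLast m j = ∑ k ∈ (Finset.Icc 1 m).erase j, ccount m k j :=
  ncard_endsWith_eq_sum (fun _ hw => hw.1.1.1) hm

end Permutations

section Membership

lemma mem_Bset {n : ℕ} {w : List ℕ} : w ∈ Bset n ↔
    IsPermOf n w ∧ AvoidsLPatterns w ∧ w ≠ excludedPerm n ∧ w.idxOf n < w.idxOf 1 := by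
  simp only [Bset, Lstar, Lset, AvoidsLPatterns, Set.mem_sdiff, Set.mem_singleton_iff,
    Set.mem_ofPred_eq, and_assoc]

lemma mem_Cset {n : ℕ} {w : List ℕ} : w ∈ Cset n ↔
    IsPermOf n w ∧ AvoidsLPatterns w ∧ w ≠ excludedPerm n ∧ w.idxOf 1 < w.idxOf n ∧
      w.idxOf n < w.idxOf 2 := by
  simp only [Cset, Lstar, Lset, AvoidsLPatterns, Set.mem_sdiff, Set.mem_singleton_iff,
    Set.mem_ofPred_eq, and_assoc]

lemma ne_excludedPerm_of_eq_append {n a : ℕ} {w u : List ℕ} (hw : w = u ++ [a]) (ha : a ≠ n) :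
    w ≠ excludedPerm n := by
  rintro rfl
  exact ha (List.singleton_inj.1 (List.append_inj' hw rfl).2).symm

end Membership

section TwoRight

def TwoRight (n i : ℕ) : Set (List ℕ) := {w ∈ Bnij n i 1 | w.idxOf n < w.idxOf 2}

lemma isPermOf_map_succ_append_one_iff {m : ℕ} {v : List ℕ} (hv : ∀ x ∈ v, 1 ≤ x) :
    IsPermOf (m + 1) (v.map (· + 1) ++ [1]) ↔ IsPermOf m v := by
  have h1 : 1 ∉ v.map (· + 1) := by
    simp only [List.mem_map, not_exists, not_and]
    exact fun x hx => by have := hv x hx; omega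
  simp only [isPermOf_iff, List.nodup_append, List.nodup_map_iff (add_left_injective 1),
    List.nodup_singleton, List.mem_singleton, List.mem_append, List.mem_map]
  refine and_congr (by grind) ⟨fun H y => ?_, fun H x => ?_⟩
  · have := H (y + 1)
    have := hv y
    grind
  · rcases Nat.lt_or_ge x 2 with hx | hx
    · grind
    · have := H (x - 1)
      grind

lemma exists_eq_map_succ_append_one {n i : ℕ} {w : List ℕ} (hw : w ∈ Bnij n i 1) :
    ∃ v : List ℕ, (∀ x ∈ v, 1 ≤ x) ∧ w = v.map (· + 1) ++ [1] := by
  obtain ⟨hw, u, rfl⟩ := hw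
  obtain ⟨hnd, hmem⟩ := isPermOf_iff.1 (mem_Bset.1 hw).1
  rw [show u ++ [i, 1] = (u ++ [i]) ++ [1] by simp] at hnd hmem ⊢
  have hge : ∀ x ∈ u ++ [i], 2 ≤ x := fun x hx => by
    have := (hmem x).1 (List.mem_append_left _ hx)
    have : x ≠ 1 := fun h => (List.nodup_append.1 hnd).2.2 x hx 1 (by simp) h
    omega
  refine ⟨(u ++ [i]).map (· - 1), fun x hx => ?_, ?_⟩
  · obtain ⟨y, hy, rfl⟩ := List.mem_map.1 hx
    have := hge y hy
    omega
  · rw [List.map_map]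
    conv_lhs => rw [← List.map_id (u ++ [i])]
    congr 1
    exact List.map_congr_left fun x hx => by have := hge x hx; simp; omega

lemma exists_map_succ_append_one_eq_iff {v : List ℕ} {j : ℕ} :
    (∃ u, v.map (· + 1) ++ [1] = u ++ [j + 1, 1]) ↔ ∃ u, v = u ++ [j] := by
  constructor
  · rintro ⟨u, hu⟩
    rw [show u ++ [j + 1, 1] = (u ++ [j + 1]) ++ [1] by simp, List.append_cancel_right_eq,
      List.map_eq_append_iff] at hu
    obtain ⟨l, l', rfl, -, hl'⟩ := hu
    obtain ⟨a, rfl, ha⟩ := List.map_eq_singleton_iff.1 hl'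
    exact ⟨l, by simpa using ha⟩
  · rintro ⟨u, rfl⟩
    exact ⟨u.map (· + 1), by simp⟩

lemma idxOf_succ_map_succ_append_one {v : List ℕ} {x : ℕ} (hx : x ∈ v) :
    (v.map (· + 1) ++ [1]).idxOf (x + 1) = v.idxOf x := by
  rw [List.idxOf_append_of_mem (List.mem_map_of_mem (f := (· + 1)) hx)]
  exact idxOf_map_of_injective (add_left_injective 1) v x

lemma map_succ_append_one_mem_twoRight_iff {m j : ℕ} {v : List ℕ} (hv : ∀ x ∈ v, 1 ≤ x)
    (hjm : j < m) :
    v.map (· + 1) ++ [1] ∈ TwoRight (m + 1) (j + 1) ↔ v ∈ {v ∈ Bset m | ∃ u, v = u ++ [j]} := by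
  have hgt : ∀ x ∈ v.map (· + 1), 1 < x := fun x hx => by
    obtain ⟨y, hy, rfl⟩ := List.mem_map.1 hx
    have := hv y hy
    omega
  have havoid : AvoidsLPatterns (v.map (· + 1) ++ [1]) ↔ AvoidsLPatterns v :=
    (avoidsLPatterns_append_singleton_iff hgt).trans
      (avoidsLPatterns_map_iff fun x _ y _ h => by simpa using h)
  simp only [TwoRight, Bnij, Set.mem_ofPred_eq, mem_Bset, isPermOf_map_succ_append_one_iff hv,
    havoid, exists_map_succ_append_one_eq_iff]
  refine ⟨fun ⟨⟨⟨hperm, havd, _, _⟩, hend⟩, hlt⟩ => ?_, fun ⟨⟨hperm, havd, _, hlt⟩, hend⟩ => ?_⟩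
  all_goals
    have hm := ((isPermOf_iff.1 hperm).2 m).2 ⟨by omega, le_rfl⟩
    have h1 := ((isPermOf_iff.1 hperm).2 1).2 ⟨le_rfl, by omega⟩
    obtain ⟨u, hu⟩ := hend
  · rw [idxOf_succ_map_succ_append_one hm, idxOf_succ_map_succ_append_one h1] at hlt
    exact ⟨⟨hperm, havd, ne_excludedPerm_of_eq_append hu (by omega), hlt⟩, u, hu⟩
  · refine ⟨⟨⟨hperm, havd, ne_excludedPerm_of_eq_append rfl (by omega),
      (idxOf_lt_idxOf_iff_mem (C := []) fun h => by simpa using hgt 1 h).2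
        (List.mem_map_of_mem hm)⟩, u, hu⟩, ?_⟩
    rwa [idxOf_succ_map_succ_append_one hm, idxOf_succ_map_succ_append_one h1]

lemma ncard_twoRight {m j : ℕ} (hjm : j < m) :
    (TwoRight (m + 1) (j + 1)).ncard = bLast m j := by
  have himage : TwoRight (m + 1) (j + 1) =
      (fun v => v.map (· + 1) ++ [1]) '' {v ∈ Bset m | ∃ u, v = u ++ [j]} := by
    ext w
    constructor
    · intro hw
      obtain ⟨v, hv, rfl⟩ := exists_eq_map_succ_append_one hw.1
      exact ⟨v, (map_succ_append_one_mem_twoRight_iff hv hjm).1 hw, rfl⟩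
    · rintro ⟨v, hvT, rfl⟩
      have hv : ∀ x ∈ v, 1 ≤ x := fun x hx => ((isPermOf_iff.1 (mem_Bset.1 hvT.1).1).2 x).1 hx |>.1
      exact (map_succ_append_one_mem_twoRight_iff hv hjm).2 hvT
  rw [himage, Set.ncard_image_of_injective _ fun v v' h => ?_, bLast]
  exact List.map_injective_iff.2 (add_left_injective 1) (List.append_cancel_right h)

end TwoRight

section Expand

def block (s : ℕ) : List ℕ := (List.range' 3 (s - 1)).reverse

lemma mem_block {s x : ℕ} : x ∈ block s ↔ 3 ≤ x ∧ x ≤ s + 1 := by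
  rw [block, List.mem_reverse, List.mem_range'_1]
  omega

lemma block_pairwise (s : ℕ) : (block s).Pairwise (· > ·) :=
  List.pairwise_reverse.2 (List.pairwise_lt_range' 1)

lemma block_nodup (s : ℕ) : (block s).Nodup :=
  (block_pairwise s).imp ne_of_gt

def expand (s : ℕ) (γ R : List ℕ) : List ℕ :=
  γ.map (· + s) ++ block s ++ 2 :: (R.map (· + s) ++ [1])

def contract (s : ℕ) (w : List ℕ) : List ℕ :=
  (w.filter fun x => x = 2 ∨ s + 1 < x).map fun x => if x = 2 then 1 else x - s

lemma contract_expand {s : ℕ} {γ R : List ℕ} (hs : 1 ≤ s) (hγR : ∀ x ∈ γ ++ R, 2 ≤ x) :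
    contract s (expand s γ R) = γ ++ 1 :: R := by
  have hkeep : ∀ l : List ℕ, (∀ x ∈ l, 2 ≤ x) →
      ((l.map (· + s)).filter fun x => x = 2 ∨ s + 1 < x).map
        (fun x => if x = 2 then 1 else x - s) = l := fun l hl => by
    rw [List.filter_eq_self.2 fun x hx => by
      obtain ⟨y, hy, rfl⟩ := List.mem_map.1 hx; have := hl y hy; simp; omega, List.map_map]
    conv_rhs => rw [← List.map_id l]
    exact List.map_congr_left fun x hx => by have := hl x hx; simp; omega
  have hblock : (block s).filter (fun x => x = 2 ∨ s + 1 < x) = [] :=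
    List.filter_eq_nil_iff.2 fun x hx => by have := mem_block.1 hx; simp; omega
  simp only [List.forall_mem_append] at hγR
  simp only [contract, expand, List.filter_append, hblock, List.filter_cons, List.map_append,
    hkeep γ hγR.1]
  simpa using hkeep R hγR.2

lemma expand_perm (s : ℕ) (γ R : List ℕ) :
    (expand s γ R).Perm ((γ ++ R).map (· + s) ++ block s ++ [2, 1]) := by
  refine List.perm_iff_count.2 fun a => ?_
  simp only [expand, List.map_append, List.count_append, List.count_cons, List.count_nil]
  omega

lemma forall_two_le_append_cons {γ R : List ℕ} {m : ℕ} (hm : 2 ≤ m)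
    (hγR : ∀ x ∈ γ ++ R, 2 ≤ x) : ∀ x ∈ γ ++ m :: R, 2 ≤ x := fun x hx => by
  simp only [List.mem_append, List.mem_cons] at hx
  rcases hx with hx | rfl | hx
  · exact hγR x (List.mem_append_left _ hx)
  · exact hm
  · exact hγR x (List.mem_append_right _ hx)

lemma isPermOf_expand_iff {m s : ℕ} {γ R : List ℕ} (hm : 1 ≤ m) (hs : 1 ≤ s)
    (hγR : ∀ x ∈ γ ++ R, 2 ≤ x) :
    IsPermOf (m + s) (expand s γ R) ↔ IsPermOf m (γ ++ 1 :: R) := by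
  have hmid : (γ ++ 1 :: R).Perm (1 :: (γ ++ R)) := List.perm_middle
  rw [isPermOf_iff, isPermOf_iff, (expand_perm s γ R).nodup_iff, hmid.nodup_iff]
  simp only [(expand_perm s γ R).mem_iff, hmid.mem_iff]
  generalize γ ++ R = L at hγR
  have h1 : 1 ∉ L := fun h => by have := hγR 1 h; omega
  have hnd : (L.map (· + s) ++ block s ++ [2, 1]).Nodup ↔ L.Nodup := by
    simp only [List.nodup_append, List.nodup_map_iff (add_left_injective s), block_nodup,
      List.mem_append, List.mem_map, mem_block]
    grind
  rw [hnd, List.nodup_cons, and_iff_right h1]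
  refine and_congr_right fun _ => ⟨fun H y => ?_, fun H x => ?_⟩
  · have := H (y + s)
    have := hγR y
    simp only [List.mem_append, List.mem_map, mem_block, List.mem_cons] at *
    grind
  · have := H (x - s)
    simp only [List.mem_append, List.mem_map, mem_block, List.mem_cons] at *
    grind

lemma map_append_one_cons {s : ℕ} {γ R : List ℕ} (hγR : ∀ x ∈ γ ++ R, 2 ≤ x) :
    (γ ++ 1 :: R).map (fun x => if x ≤ 1 then x + 1 else x + s) =
      γ.map (· + s) ++ 2 :: R.map (· + s) := by
  simp only [List.forall_mem_append] at hγR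
  simp only [List.map_append, List.map_cons, le_refl, if_true]
  congr 1
  · exact List.map_congr_left fun x hx => by have := hγR.1 x hx; simp; omega
  · exact congrArg _ (List.map_congr_left fun x hx => by have := hγR.2 x hx; simp; omega)

lemma avoidsLPatterns_expand_iff {m s : ℕ} {γ R : List ℕ} (hs : 1 ≤ s) (hm : 2 ≤ m)
    (hnd : (expand s γ (m :: R)).Nodup) (hγ : γ.Pairwise (· > ·))
    (hγR : ∀ x ∈ γ ++ R, 2 ≤ x ∧ x < m) :
    AvoidsLPatterns (expand s γ (m :: R)) ↔ AvoidsLPatterns (γ ++ 1 :: m :: R) := by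
  have hmap := map_append_one_cons (s := s) (γ := γ) (R := m :: R)
    (forall_two_le_append_cons hm fun x hx => (hγR x hx).1)
  rw [List.map_cons] at hmap
  simp only [List.forall_mem_append] at hγR
  obtain ⟨hγb, hRb⟩ := hγR
  have hsplit : expand s γ (m :: R) =
      (γ.map (· + s) ++ block s ++ 2 :: (m + s) :: R.map (· + s)) ++ [1] := by
    simp [expand]
  rw [hsplit] at hnd ⊢
  rw [avoidsLPatterns_append_singleton_iff, avoidsLPatterns_insert_block_iff
      (List.nodup_append.1 hnd).1 (List.pairwise_map.2 (hγ.imp (by omega))) (block_pairwise s),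
    ← hmap, avoidsLPatterns_map_iff (StrictMono.strictMonoOn (fun x y hxy => by
      split_ifs <;> omega) _)]
  · intro b hb
    simp only [mem_block, List.mem_map] at hb ⊢
    refine ⟨by omega, ?_, ?_⟩ <;> rintro _ ⟨x, hx, rfl⟩
    · have := hγb x hx; omega
    · have := hRb x hx; omega
  · simp only [List.mem_map]
    rintro _ ⟨x, hx, rfl⟩
    have := hγb x hx; omega
  · simp only [List.mem_map]
    rintro _ ⟨x, hx, rfl⟩
    have := hRb x hx; omega
  · simp only [List.mem_append, List.mem_map, mem_block, List.mem_cons]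
    rintro x (((⟨y, hy, rfl⟩ | hx) | rfl | rfl | ⟨y, hy, rfl⟩))
    · have := hγb y hy; omega
    · omega
    · omega
    · omega
    · have := hRb y hy; omega

lemma idxOf_lt_idxOf_two_expand_iff {s y : ℕ} {γ R : List ℕ} (hs : 1 ≤ s)
    (hγ : ∀ x ∈ γ, 2 ≤ x) :
    (expand s γ R).idxOf y < (expand s γ R).idxOf 2 ↔ y ∈ γ.map (· + s) ++ block s := by
  rw [expand]
  refine idxOf_lt_idxOf_iff_mem fun h => ?_
  simp only [List.mem_append, List.mem_map, mem_block] at h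
  rcases h with ⟨x, hx, hx2⟩ | h
  · have := hγ x hx; omega
  · omega

lemma idxOf_add_two_lt_idxOf_two_expand_iff {s : ℕ} {γ R : List ℕ} (hs : 1 ≤ s)
    (hγ : ∀ x ∈ γ, 2 ≤ x) :
    (expand s γ R).idxOf (s + 2) < (expand s γ R).idxOf 2 ↔ 2 ∈ γ := by
  rw [idxOf_lt_idxOf_two_expand_iff hs hγ]
  simp only [List.mem_append, List.mem_map, mem_block]
  constructor
  · rintro (⟨x, hx, hxs⟩ | h)
    · exact (show x = 2 by omega) ▸ hx
    · omega
  · exact fun h => Or.inl ⟨2, h, by omega⟩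

lemma expand_idxOf_lt {m s : ℕ} {γ R : List ℕ} (hs : 1 ≤ s) (hm : 2 ≤ m)
    (hγR : ∀ x ∈ γ ++ R, 2 ≤ x ∧ x < m) :
    (expand s γ (m :: R)).idxOf (m + s) < (expand s γ (m :: R)).idxOf 1 ∧
    (expand s γ (m :: R)).idxOf 2 < (expand s γ (m :: R)).idxOf (m + s) ∧
    ∀ y, 3 ≤ y → y ≤ s + 1 → (expand s γ (m :: R)).idxOf y < (expand s γ (m :: R)).idxOf 2 := by
  simp only [List.forall_mem_append] at hγR
  obtain ⟨hγ, hR⟩ := hγR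
  refine ⟨?_, ?_, fun y hy3 hys => ?_⟩
  · rw [show expand s γ (m :: R) =
        (γ.map (· + s) ++ block s ++ 2 :: (m + s) :: R.map (· + s)) ++ 1 :: [] by simp [expand]]
    refine (idxOf_lt_idxOf_iff_mem fun h => ?_).2 (by simp)
    simp only [List.mem_append, List.mem_map, mem_block, List.mem_cons] at h
    rcases h with (⟨x, hx, hx1⟩ | h) | h | h | ⟨x, hx, hx1⟩
    · have := hγ x hx; omega
    rotate_left 3
    · have := hR x hx; omega
    all_goals omega
  · rw [show expand s γ (m :: R) =
        (γ.map (· + s) ++ block s ++ [2]) ++ (m + s) :: (R.map (· + s) ++ [1]) by simp [expand]]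
    refine (idxOf_lt_idxOf_iff_mem fun h => ?_).2 (by simp)
    simp only [List.mem_append, List.mem_map, mem_block, List.mem_cons] at h
    rcases h with (⟨x, hx, hx1⟩ | h) | h
    · have := hγ x hx; omega
    · omega
    · simp at h; omega
  · exact (idxOf_lt_idxOf_two_expand_iff hs (fun x hx => (hγ x hx).1)).2
      (List.mem_append_right _ (mem_block.2 ⟨hy3, hys⟩))

lemma exists_expand_eq_append_iff {m d s : ℕ} {γ R : List ℕ} :
    (∃ u, expand s γ (m :: R) = u ++ [d + s, 1]) ↔ ∃ u, γ ++ 1 :: m :: R = u ++ [d] := by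
  have hsplit : expand s γ (m :: R) =
      (γ.map (· + s) ++ block s ++ 2 :: (m :: R).map (· + s)) ++ [1] := by
    simp [expand]
  simp only [hsplit, show ∀ u : List ℕ, u ++ [d + s, 1] = (u ++ [d + s]) ++ [1] by simp,
    List.append_cancel_right_eq, ← List.getLast?_eq_some_iff]
  rw [List.getLast?_append_of_ne_nil _ (List.cons_ne_nil _ _),
    List.getLast?_append_of_ne_nil _ (List.cons_ne_nil _ _), List.map_cons,
    List.getLast?_cons_cons, List.getLast?_cons_cons,
    show (m + s) :: R.map (· + s) = (m :: R).map (· + s) from rfl, List.getLast?_map]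
  simp

end Expand

section TwoLeft

lemma lt_of_mem_of_isPermOf {m a : ℕ} {γ R : List ℕ} (hc : IsPermOf m (γ ++ a :: m :: R))
    {x : ℕ} (hx : x ∈ γ ++ R) : x < m := by
  obtain ⟨hnd, hmem⟩ := isPermOf_iff.1 hc
  have := (hmem x).1 (by simp only [List.mem_append, List.mem_cons] at hx ⊢; tauto)
  have := (ne_of_mem_of_nodup_append_cons_cons hnd hx).2
  omega

lemma max_notMem_append_one {m : ℕ} {γ R : List ℕ} (hm : 2 ≤ m)
    (hc : IsPermOf m (γ ++ 1 :: m :: R)) : m ∉ γ ++ [1] := by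
  simpa [show m ≠ 1 by omega] using
    fun h => (lt_of_mem_of_isPermOf hc (List.mem_append_left R h)).ne rfl

lemma idxOf_one_lt_idxOf_max {m : ℕ} {γ R : List ℕ} (hm : 2 ≤ m)
    (hc : IsPermOf m (γ ++ 1 :: m :: R)) :
    (γ ++ 1 :: m :: R).idxOf 1 < (γ ++ 1 :: m :: R).idxOf m := by
  have hmγ := max_notMem_append_one hm hc
  simpa using (idxOf_lt_idxOf_iff_mem (C := R) (y := 1) hmγ).2 (by simp)

lemma idxOf_max_lt_idxOf_two_iff {m : ℕ} {γ R : List ℕ} (hm : 3 ≤ m)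
    (hc : IsPermOf m (γ ++ 1 :: m :: R)) :
    (γ ++ 1 :: m :: R).idxOf m < (γ ++ 1 :: m :: R).idxOf 2 ↔ 2 ∉ γ := by
  have hmγ := max_notMem_append_one (by omega) hc
  have h2c : 2 ∈ γ ++ 1 :: m :: R := ((isPermOf_iff.1 hc).2 2).2 ⟨by omega, by omega⟩
  have hne : (γ ++ 1 :: m :: R).idxOf 2 ≠ (γ ++ 1 :: m :: R).idxOf m := fun h => by
    have := (List.idxOf_inj h2c).1 h
    omega
  have h2 := idxOf_lt_idxOf_iff_mem (y := 2) (C := R) hmγ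
  simp only [List.append_assoc, List.singleton_append, List.mem_append, List.mem_singleton,
    OfNat.ofNat_ne_one, or_false] at h2
  rw [← h2]
  constructor <;> intro <;> omega

def TwoLeft (n i s : ℕ) : Set (List ℕ) :=
  {w ∈ Bnij n i 1 | w.idxOf 2 < w.idxOf n ∧
    (∀ y, 3 ≤ y → y ≤ s + 1 → w.idxOf y < w.idxOf 2) ∧ ¬ w.idxOf (s + 2) < w.idxOf 2}

lemma expand_mem_twoLeft_iff {m d s : ℕ} {γ R : List ℕ} (hs : 1 ≤ s) (hd : 2 ≤ d) (hdm : d < m)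
    (hγR : ∀ x ∈ γ ++ R, 2 ≤ x) (hγ : γ.Pairwise (· > ·)) :
    expand s γ (m :: R) ∈ TwoLeft (m + s) (d + s) s ↔
      γ ++ 1 :: m :: R ∈ {c ∈ Cset m | ∃ u, c = u ++ [d]} := by
  have hperm := isPermOf_expand_iff (m := m) (R := m :: R) (by omega) hs
    (forall_two_le_append_cons (by omega) hγR)
  have hbound : IsPermOf m (γ ++ 1 :: m :: R) → ∀ x ∈ γ ++ R, 2 ≤ x ∧ x < m :=
    fun hc x hx => ⟨hγR x hx, lt_of_mem_of_isPermOf hc hx⟩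
  have havoid : IsPermOf m (γ ++ 1 :: m :: R) →
      (AvoidsLPatterns (expand s γ (m :: R)) ↔ AvoidsLPatterns (γ ++ 1 :: m :: R)) := fun hc =>
    avoidsLPatterns_expand_iff hs (by omega) (isPermOf_iff.1 (hperm.2 hc)).1 hγ (hbound hc)
  have hw1 : expand s γ (m :: R) ≠ excludedPerm (m + s) :=
    ne_excludedPerm_of_eq_append (a := 1)
      (u := γ.map (· + s) ++ block s ++ 2 :: (m :: R).map (· + s)) (by simp [expand]) (by omega)
  simp only [TwoLeft, Bnij, Set.mem_ofPred_eq, mem_Bset, mem_Cset, hperm,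
    exists_expand_eq_append_iff,
    idxOf_add_two_lt_idxOf_two_expand_iff hs fun x hx => hγR x (List.mem_append_left _ hx)]
  constructor
  · rintro ⟨⟨⟨hc, hav, -, -⟩, u, hu⟩, -, -, h2⟩
    exact ⟨⟨hc, (havoid hc).1 hav, ne_excludedPerm_of_eq_append hu (by omega),
      idxOf_one_lt_idxOf_max (by omega) hc, (idxOf_max_lt_idxOf_two_iff (by omega) hc).2 h2⟩, u, hu⟩
  · rintro ⟨⟨hc, hav, -, -, h2⟩, hend⟩
    obtain ⟨i1, i2, i3⟩ := expand_idxOf_lt hs (by omega) (hbound hc)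
    exact ⟨⟨⟨hc, (havoid hc).2 hav, hw1, i1⟩, hend⟩, i2, i3,
      (idxOf_max_lt_idxOf_two_iff (by omega) hc).1 h2⟩

lemma eq_filter_append_block {s : ℕ} {P : List ℕ} (hP : P.Pairwise (· > ·))
    (h3 : ∀ x ∈ P, 3 ≤ x) (hblk : ∀ y, 3 ≤ y → y ≤ s + 1 → y ∈ P) :
    P = P.filter (fun x => s + 1 < x) ++ block s := by
  have hsmall : (P.filter fun x => !decide (s + 1 < x)).Perm (block s) := by
    refine (List.perm_ext_iff_of_nodup ((hP.imp ne_of_gt).filter _) (block_nodup s)).2 fun x => ?_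
    simp only [List.mem_filter, mem_block, Bool.not_eq_true', decide_eq_false_iff_not, not_lt]
    exact ⟨fun ⟨hx, hxs⟩ => ⟨h3 x hx, hxs⟩, fun ⟨hx3, hxs⟩ => ⟨hblk x hx3 hxs, hxs⟩⟩
  refine List.Perm.eq_of_pairwise (fun a b _ _ hab hba => by omega) hP ?_
    (((List.filter_append_perm _ P).symm.trans (hsmall.append_left _)))
  refine List.pairwise_append.2 ⟨hP.filter _, block_pairwise s, fun a ha b hb => ?_⟩
  have := (List.mem_filter.1 ha).2
  have := mem_block.1 hb
  simp only [decide_eq_true_eq] at *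
  omega

lemma exists_eq_append_one_max_of_mem_Cset {m : ℕ} {c : List ℕ} (hm : 1 ≤ m) (hc : c ∈ Cset m) :
    ∃ γ R, c = γ ++ 1 :: m :: R ∧ (∀ x ∈ γ ++ R, 2 ≤ x) ∧ γ.Pairwise (· > ·) := by
  obtain ⟨hperm, havd, -, h1m, -⟩ := mem_Cset.1 hc
  obtain ⟨hnd, hmem⟩ := isPermOf_iff.1 hperm
  obtain ⟨γ, R, rfl, hγ⟩ := exists_eq_append_cons_cons_of_min_max hnd havd.1
    ((hmem m).2 ⟨hm, le_rfl⟩) (fun x hx => ((hmem x).1 hx).1) (fun x hx => ((hmem x).1 hx).2) h1m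
  refine ⟨γ, R, rfl, fun x hx => ?_, hγ⟩
  have := (ne_of_mem_of_nodup_append_cons_cons hnd hx).1
  have := (hmem x).1 (by simp only [List.mem_append, List.mem_cons] at hx ⊢; tauto)
  omega

lemma exists_eq_append_two_max_of_mem_Bnij {n i : ℕ} {w : List ℕ} (hn : 2 ≤ n)
    (hw : w ∈ Bnij n i 1) (h2n : w.idxOf 2 < w.idxOf n) :
    ∃ P Q, w = P ++ 2 :: n :: (Q ++ [1]) ∧ P.Pairwise (· > ·) ∧ ∀ x ∈ P ++ Q, 3 ≤ x := by
  obtain ⟨hB, u, rfl⟩ := hw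
  obtain ⟨hperm, havd, -, -⟩ := mem_Bset.1 hB
  obtain ⟨hnd, hmem⟩ := isPermOf_iff.1 hperm
  rw [show u ++ [i, 1] = (u ++ [i]) ++ [1] by simp] at hnd hmem havd h2n ⊢
  generalize u ++ [i] = v at hnd hmem havd h2n ⊢
  have hv : ∀ x ∈ v, 2 ≤ x ∧ x ≤ n := fun x hx => by
    have := (hmem x).1 (List.mem_append_left _ hx)
    have := (List.nodup_append.1 hnd).2.2 x hx 1 (by simp)
    omega
  have hmemv : ∀ x, 2 ≤ x → x ≤ n → x ∈ v := fun x h2 hn' => by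
    simpa [show x ≠ 1 by omega] using (hmem x).2 ⟨by omega, hn'⟩
  have hvnd := (List.nodup_append.1 hnd).1
  rw [List.idxOf_append_of_mem (hmemv 2 le_rfl hn),
    List.idxOf_append_of_mem (hmemv n hn le_rfl)] at h2n
  obtain ⟨P, Q, rfl, hP⟩ := exists_eq_append_cons_cons_of_min_max hvnd
    ((avoidsLPatterns_append_singleton_iff fun x hx => by have := hv x hx; omega).1 havd).1
    (hmemv n hn le_rfl) (fun x hx => (hv x hx).1) (fun x hx => (hv x hx).2) h2n
  refine ⟨P, Q, by simp, hP, fun x hx => ?_⟩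
  have := (ne_of_mem_of_nodup_append_cons_cons hvnd hx).1
  have := hv x (by simp only [List.mem_append, List.mem_cons] at hx ⊢; tauto)
  omega

lemma exists_eq_expand_of_mem_twoLeft {m i s : ℕ} {w : List ℕ} (hm : 2 ≤ m)
    (hw : w ∈ TwoLeft (m + s) i s) :
    ∃ γ R, w = expand s γ (m :: R) ∧ (∀ x ∈ γ ++ R, 2 ≤ x) ∧ γ.Pairwise (· > ·) := by
  obtain ⟨hB, h2n, hblk, -⟩ := hw
  have hnd := (isPermOf_iff.1 (mem_Bset.1 hB.1).1).1
  obtain ⟨P, Q, rfl, hP, hPQ⟩ := exists_eq_append_two_max_of_mem_Bnij (by omega) hB h2n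
  have h2P : 2 ∉ P := fun h => by have := hPQ 2 (List.mem_append_left _ h); omega
  simp only [idxOf_lt_idxOf_iff_mem h2P] at hblk
  have hQ : ∀ x ∈ Q, s + 2 ≤ x := fun x hx => by
    have := hPQ x (List.mem_append_right _ hx)
    by_contra hxs
    exact (List.nodup_append.1 hnd).2.2 x (hblk x (by omega) (by omega)) x (by simp [hx]) rfl
  set Pbig := P.filter fun x => s + 1 < x
  have hPbig : ∀ x ∈ Pbig, s + 2 ≤ x := fun x hx => by
    have := (List.mem_filter.1 hx).2
    simp only [decide_eq_true_eq] at this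
    omega
  have hPeq : P = Pbig ++ block s :=
    eq_filter_append_block hP (fun x hx => hPQ x (List.mem_append_left _ hx)) hblk
  refine ⟨Pbig.map (· - s), Q.map (· - s), ?_, fun x hx => ?_, ?_⟩
  · rw [expand, map_sub_map_add fun x hx => by have := hPbig x hx; omega, List.map_cons,
      map_sub_map_add fun x hx => by have := hQ x hx; omega]
    conv_lhs => rw [hPeq]
    simp
  · simp only [List.mem_append, List.mem_map] at hx
    rcases hx with ⟨y, hy, rfl⟩ | ⟨y, hy, rfl⟩
    · have := hPbig y hy; omega
    · have := hQ y hy; omega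
  · refine List.pairwise_map.2 ((hP.filter _).imp_of_mem fun ha hb hab => ?_)
    have := hPbig _ ha
    have := hPbig _ hb
    omega

lemma ncard_twoLeft {m d s : ℕ} (hs : 1 ≤ s) (hd : 2 ≤ d) (hdm : d < m) :
    (TwoLeft (m + s) (d + s) s).ncard = cLast m d := by
  have hinj : Set.InjOn (contract s) (TwoLeft (m + s) (d + s) s) := by
    intro w₁ hw₁ w₂ hw₂ h
    obtain ⟨γ₁, R₁, rfl, hγR₁, -⟩ := exists_eq_expand_of_mem_twoLeft (by omega) hw₁
    obtain ⟨γ₂, R₂, rfl, hγR₂, -⟩ := exists_eq_expand_of_mem_twoLeft (by omega) hw₂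
    have h₁ := forall_two_le_append_cons (m := m) (by omega) hγR₁
    rw [contract_expand hs h₁,
      contract_expand hs (forall_two_le_append_cons (m := m) (by omega) hγR₂)] at h
    obtain ⟨rfl, -, hR⟩ := (List.append_cons_inj_of_notMem
      (fun h => by have := h₁ 1 (List.mem_append_left _ h); omega)
      (fun h => by have := h₁ 1 (List.mem_append_right _ h); omega)).1 h
    rw [hR]
  have himage : contract s '' TwoLeft (m + s) (d + s) s = {c ∈ Cset m | ∃ u, c = u ++ [d]} := by
    ext c
    constructor
    · rintro ⟨w, hw, rfl⟩
      obtain ⟨γ, R, rfl, hγR, hγ⟩ := exists_eq_expand_of_mem_twoLeft (by omega) hw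
      rw [contract_expand hs (forall_two_le_append_cons (m := m) (by omega) hγR)]
      exact (expand_mem_twoLeft_iff hs hd hdm hγR hγ).1 hw
    · intro hc
      obtain ⟨γ, R, rfl, hγR, hγ⟩ := exists_eq_append_one_max_of_mem_Cset (by omega) hc.1
      exact ⟨_, (expand_mem_twoLeft_iff hs hd hdm hγR hγ).2 hc,
        contract_expand hs (forall_two_le_append_cons (m := m) (by omega) hγR)⟩
  rw [cLast, ← himage, hinj.ncard_image]

end TwoLeft

section Partition

lemma three_le_and_idxOf_two_lt {n i : ℕ} {w : List ℕ} (hn : 3 ≤ n) (hi : i < n)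
    (hw : w ∈ Bnij n i 1) (h2n : w.idxOf 2 < w.idxOf n) : 3 ≤ i ∧ w.idxOf 2 < w.idxOf i := by
  obtain ⟨hB, u, rfl⟩ := hw
  obtain ⟨hnd, hmem⟩ := isPermOf_iff.1 (mem_Bset.1 hB).1
  have hiu : i ∉ u := fun h => (List.nodup_append.1 hnd).2.2 i h i (by simp) rfl
  have hleft : ∀ y, 2 ≤ y → y ≤ n → y ≠ i → (u ++ [i, 1]).idxOf y < (u ++ [i, 1]).idxOf i :=
    fun y hy2 hyn hyi => (idxOf_lt_idxOf_iff_mem hiu).2 (by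
      simpa [hyi, show y ≠ 1 by omega] using (hmem y).2 ⟨by omega, hyn⟩)
  have hibound := (hmem i).1 (by simp)
  have hi2 : i ≠ 2 := fun h => by
    have := hleft n (by omega) le_rfl (by omega)
    rw [← h] at h2n
    omega
  have hi1' : i ≠ 1 := fun h => by
    have := (List.nodup_append.1 hnd).2.1
    simp [h] at this
  exact ⟨by omega, hleft 2 le_rfl (by omega) (Ne.symm hi2)⟩

lemma Bnij_eq_union {n i : ℕ} (hn : 3 ≤ n) (hi : i < n) :
    Bnij n i 1 = TwoRight n i ∪ ⋃ d ∈ Finset.Icc 2 (i - 1), TwoLeft n i (i - d) := by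
  ext w
  simp only [Set.mem_union, Set.mem_iUnion, Finset.mem_Icc, exists_prop]
  refine ⟨fun hw => ?_, fun h => ?_⟩
  · by_cases hn2 : w.idxOf n < w.idxOf 2
    · exact Or.inl ⟨hw, hn2⟩
    have hmem := (isPermOf_iff.1 (mem_Bset.1 hw.1).1).2
    have hne : w.idxOf 2 ≠ w.idxOf n := fun h =>
      absurd ((List.idxOf_inj ((hmem 2).2 ⟨by omega, by omega⟩)).1 h) (by omega)
    have h2n : w.idxOf 2 < w.idxOf n := by omega
    obtain ⟨hi3, h2i⟩ := three_le_and_idxOf_two_lt hn hi hw h2n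
    have hex : ∃ k, ¬ w.idxOf (k + 3) < w.idxOf 2 :=
      ⟨i - 3, by rw [show i - 3 + 3 = i by omega]; omega⟩
    have hfind := Nat.find_min' hex (show ¬ w.idxOf (i - 3 + 3) < w.idxOf 2 by
      rw [show i - 3 + 3 = i by omega]; omega)
    -- `Nat.find hex + 1` is the largest `s` with `3, …, s + 1` all left of 2
    refine Or.inr ⟨i - (Nat.find hex + 1), ⟨by omega, by omega⟩, hw, h2n, fun y hy3 hy => ?_, ?_⟩
    · have := Nat.find_min hex (show y - 3 < Nat.find hex by omega)
      rwa [not_not, show y - 3 + 3 = y by omega] at this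
    · rw [show i - (i - (Nat.find hex + 1)) + 2 = Nat.find hex + 3 by omega]
      exact Nat.find_spec hex
  · rcases h with h | ⟨d, -, h⟩
    exacts [h.1, h.1]

lemma bcount_eq_ncard_add_sum {n i : ℕ} (hn : 3 ≤ n) (hi : i < n) :
    bcount n i 1 = (TwoRight n i).ncard +
      ∑ d ∈ Finset.Icc 2 (i - 1), (TwoLeft n i (i - d)).ncard := by
  have hfin : ∀ S ⊆ Bnij n i 1, S.Finite := fun S hS =>
    finite_of_forall_isPermOf fun w hw => (mem_Bset.1 (hS hw).1).1
  have hdisj : Disjoint (TwoRight n i) (⋃ d ∈ Finset.Icc 2 (i - 1), TwoLeft n i (i - d)) := by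
    refine Set.disjoint_left.2 fun w hR hL => ?_
    simp only [Set.mem_iUnion] at hL
    obtain ⟨d, -, hw⟩ := hL
    exact absurd hR.2 (by have := hw.2.1; omega)
  have hpair : (↑(Finset.Icc 2 (i - 1)) : Set ℕ).PairwiseDisjoint fun d => TwoLeft n i (i - d) := by
    intro d hd d' hd' hne
    simp only [Finset.coe_Icc, Set.mem_Icc] at hd hd'
    refine Set.disjoint_left.2 fun w hw hw' => ?_
    rcases Nat.lt_or_gt_of_ne (show i - d ≠ i - d' by omega) with h | h
    · exact hw.2.2.2 (hw'.2.2.1 _ (by omega) (by omega))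
    · exact hw'.2.2.2 (hw.2.2.1 _ (by omega) (by omega))
  rw [bcount, Bnij_eq_union hn hi, Set.ncard_union_eq hdisj (hfin _ fun w hw => hw.1)
      (Set.Finite.biUnion (Finset.finite_toSet _) fun d _ => hfin _ fun w hw => hw.1),
    ncard_biUnion_finset (fun d _ => hfin _ fun w hw => hw.1) hpair]

end Partition

theorem stmt17 (n i : ℕ) (hn : 3 ≤ n) (hi2 : 2 ≤ i) (hi : i ≤ n - 1) :
    bcount n i 1 =
      (∑ k ∈ (Finset.Icc 1 (n - 1)).erase (i - 1), bcount (n - 1) k (i - 1)) +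
      ∑ d ∈ Finset.Icc 2 (i - 1),
        ∑ k ∈ (Finset.Icc 1 (n - i + d)).erase d, ccount (n - i + d) k d := by
  have hright : (TwoRight n i).ncard = bLast (n - 1) (i - 1) := by
    have := ncard_twoRight (m := n - 1) (j := i - 1) (by omega)
    rwa [Nat.sub_add_cancel (by omega : 1 ≤ n), Nat.sub_add_cancel (by omega : 1 ≤ i)] at this
  have hleft : ∀ d ∈ Finset.Icc 2 (i - 1), (TwoLeft n i (i - d)).ncard = cLast (n - i + d) d := by
    intro d hd
    rw [Finset.mem_Icc] at hd
    have := ncard_twoLeft (m := n - i + d) (d := d) (s := i - d) (by omega) hd.1 (by omega)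
    rwa [show n - i + d + (i - d) = n by omega, show d + (i - d) = i by omega] at this
  rw [bcount_eq_ncard_add_sum hn (by omega), hright, bLast_eq_sum_bcount (by omega),
    Finset.sum_congr rfl hleft]
  exact congrArg _ (Finset.sum_congr rfl fun d hd => cLast_eq_sum_ccount (by
    rw [Finset.mem_Icc] at hd; omega))
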